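/- arXiv:2104.09716 — 4 statements merged into one kernel-verified Lean document; each statement's English description precedes it below -/
import Mathlib

section
/- For every k > 0, the majoring ordering ≼_maj on the set P_f(ℕ^k) of finite subsets of ℕ^k is a well-quasi-ordering: for every infinite sequence (X_i)_{i∈ℕ} of finite subsets of ℕ^k there exist indices i < j such that X_i ≼_maj X_j. -/
/-- The majoring ordering on finite subsets of ℕ^k:
`X ≼_maj Y` iff every `x ∈ X` is componentwise below some `y ∈ Y`. -/
def MajLe {k : ℕ} (X Y : Finset (Fin k → ℕ)) : Prop :=
  ∀ x ∈ X, ∃ y ∈ Y, x ≤ y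

/-- For every k > 0, the majoring ordering on `P_f(ℕ^k)` is a well-quasi-ordering. -/
theorem majoring_wqo (k : ℕ) (hk : 0 < k) (X : ℕ → Finset (Fin k → ℕ)) :
    ∃ i j, i < j ∧ MajLe (X i) (X j) := by
  haveI inst : ∀ i : Fin k, IsWellOrder ℕ (· < ·) := fun _ => inferInstance
  have hpwo : (Set.univ : Set (Fin k → ℕ)).IsPWO :=
    Set.isPWO_of_wellQuasiOrderedLE Set.univ
  have h := Set.PartiallyWellOrderedOn.partiallyWellOrderedOn_sublistForall₂ (r := (· ≤ ·)) hpwo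
  obtain ⟨i, j, hij, hle⟩ := h.exists_lt (f := fun n => (X n).toList) (fun n x _ => Set.mem_univ x)
  obtain ⟨l', hall, hsub⟩ := List.sublistForall₂_iff.1 hle
  refine ⟨i, j, hij, fun x hx => ?_⟩
  rw [← Finset.mem_toList, List.mem_iff_get] at hx
  obtain ⟨n, rfl⟩ := hx
  have hlen := hall.length_eq
  have hy : l'.get (Fin.cast hlen n) ∈ (X j).toList :=
    hsub.subset (List.get_mem _ _)
  exact ⟨_, Finset.mem_toList.1 hy, hall.get n.isLt (hlen ▸ n.isLt)⟩
end

section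
/- For every k > 0, the minoring ordering ≼_min on the set P_f(ℕ^k) of finite subsets of ℕ^k is a well-quasi-ordering: for every infinite sequence (X_i)_{i∈ℕ} of finite subsets of ℕ^k there exist indices i < j such that X_i ≼_min X_j. -/
/-- The minoring ordering on finite subsets of ℕ^k:
`X ≼_min Y` iff every `y ∈ Y` is componentwise above some `x ∈ X`. -/
def MinLe {k : ℕ} (X Y : Finset (Fin k → ℕ)) : Prop :=
  ∀ y ∈ Y, ∃ x ∈ X, x ≤ y

open Classical in
/-- The set of "box bounds" describing the complement of the upward closure of `X`. -/
noncomputable def boxes {k : ℕ} (X : Finset (Fin k → ℕ)) : Finset (Fin k → ℕ∞) :=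
  Finset.image (fun ψ : {x // x ∈ X} → Fin k =>
    fun t => (Finset.univ.filter (fun x : {x // x ∈ X} => ψ x = t)).inf
      (fun x => ((x : Fin k → ℕ) t : ℕ∞))) Finset.univ

lemma mem_box_iff {k : ℕ} (X : Finset (Fin k → ℕ)) (y : Fin k → ℕ) :
    (∃ b ∈ boxes X, ∀ t, (y t : ℕ∞) < b t) ↔ ∀ x ∈ X, ¬ x ≤ y := by
  classical
  constructor
  · rintro ⟨b, hb, hlt⟩ x hx hxy
    simp only [boxes, Finset.mem_image, Finset.mem_univ] at hb
    obtain ⟨ψ, -, rfl⟩ := hb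
    set t := ψ ⟨x, hx⟩ with ht
    have hmem : (⟨x, hx⟩ : {x // x ∈ X}) ∈
        Finset.univ.filter (fun z : {x // x ∈ X} => ψ z = t) := by
      simp [ht]
    have hle := Finset.inf_le (f := fun z : {x // x ∈ X} => ((z : Fin k → ℕ) t : ℕ∞)) hmem
    have hlt2 : (y t : ℕ∞) < ((x t : ℕ) : ℕ∞) := lt_of_lt_of_le (hlt t) hle
    exact absurd (hxy t) (not_le.2 (by exact_mod_cast hlt2))
  · intro h
    have h' : ∀ x : {x // x ∈ X}, ∃ t, y t < (x : Fin k → ℕ) t := by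
      intro x
      have := h x x.2
      rw [Pi.le_def, not_forall] at this
      obtain ⟨t, ht⟩ := this
      exact ⟨t, not_le.1 ht⟩
    refine ⟨_, Finset.mem_image_of_mem _ (Finset.mem_univ (fun x => (h' x).choose)), ?_⟩
    intro t
    rw [Finset.lt_inf_iff (by exact_mod_cast WithTop.coe_lt_top (y t))]
    intro x hx
    simp only [Finset.mem_filter] at hx
    have := (h' x).choose_spec
    rw [hx.2] at this
    exact_mod_cast this

lemma boxes_le_minLe {k : ℕ} (A B : Finset (Fin k → ℕ))
    (h : ∀ b ∈ boxes A, ∃ b' ∈ boxes B, b ≤ b') : MinLe A B := by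
  intro y hy
  by_contra hcon
  push_neg at hcon
  have : ∀ x ∈ A, ¬ x ≤ y := fun x hx hxy => hcon x hx hxy
  obtain ⟨b, hb, hlt⟩ := (mem_box_iff A y).2 this
  obtain ⟨b', hb', hbb'⟩ := h b hb
  have : ∀ x ∈ B, ¬ x ≤ y :=
    (mem_box_iff B y).1 ⟨b', hb', fun t => lt_of_lt_of_le (hlt t) (hbb' t)⟩
  exact this y hy le_rfl

lemma forall₂_mem {α : Type*} {r : α → α → Prop} {l₁ l : List α}
    (hf : List.Forall₂ r l₁ l) : ∀ a ∈ l₁, ∃ b ∈ l, r a b := by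
  induction hf with
  | nil => simp
  | cons hr hf ih =>
    intro a ha
    rcases List.mem_cons.1 ha with rfl | ha'
    · exact ⟨_, List.mem_cons_self, hr⟩
    · obtain ⟨b, hb, hr'⟩ := ih a ha'
      exact ⟨b, List.mem_cons_of_mem _ hb, hr'⟩

lemma sublistForall₂_mem {α : Type*} {r : α → α → Prop} {l₁ l₂ : List α}
    (h : List.SublistForall₂ r l₁ l₂) : ∀ a ∈ l₁, ∃ b ∈ l₂, r a b := by
  rw [List.sublistForall₂_iff] at h
  obtain ⟨l, hf, hsub⟩ := h
  intro a ha
  obtain ⟨b, hb, hr⟩ := forall₂_mem hf a ha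
  exact ⟨b, hsub.subset hb, hr⟩

/-- For every k > 0, the minoring ordering on `P_f(ℕ^k)` is a well-quasi-ordering. -/
theorem minoring_wqo (k : ℕ) (hk : 0 < k) (X : ℕ → Finset (Fin k → ℕ)) :
    ∃ i j, i < j ∧ MinLe (X i) (X j) := by
  classical
  haveI : IsWellOrder ℕ∞ (· < ·) := ⟨⟩
  have hpwo : (Set.univ : Set (Fin k → ℕ∞)).PartiallyWellOrderedOn (· ≤ ·) :=
    Set.isPWO_univ_iff.2 inferInstance
  have higman := hpwo.partiallyWellOrderedOn_sublistForall₂ (· ≤ ·)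
  obtain ⟨i, j, hij, hrel⟩ := higman.exists_lt (f := fun i => (boxes (X i)).toList)
    (fun _ => fun x _ => Set.mem_univ x)
  refine ⟨i, j, hij, boxes_le_minLe _ _ ?_⟩
  intro b hb
  obtain ⟨b', hb', hle⟩ := sublistForall₂_mem hrel b (Finset.mem_toList.2 hb)
  exact ⟨b', Finset.mem_toList.1 hb', hle⟩
end

section
/- For all fixed k, d > 0, every primitive-recursive-style control function g (monotone with g(x) ≥ x) and every n ∈ ℕ, there is a finite maximum length of (g,n)-controlled bad sequences over ((P_f(ℕ^k))^d, ≼_maj^d, ‖·‖): there exists N such that every sequence (a_0, …, a_{N}) in (P_f(ℕ^k))^d with ‖a_i‖ ≤ g^i(n) for all i contains indices i < j with a_i ≼_maj^d a_j. -/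
/-- The norm of a tuple `x ∈ ℕ^k` is its maximum coordinate. -/
def vecNorm {k : ℕ} (x : Fin k → ℕ) : ℕ := Finset.univ.sup x

/-- The norm of a finite set `X ⊆ ℕ^k` is the maximum of its cardinality and
of the norms of its elements. -/
def setNorm {k : ℕ} (X : Finset (Fin k → ℕ)) : ℕ :=
  max X.card (X.sup vecNorm)

/-- The norm of a d-tuple of finite sets is the maximum of the norms of its entries. -/
def tupNorm {k d : ℕ} (X : Fin d → Finset (Fin k → ℕ)) : ℕ :=
  Finset.univ.sup fun l => setNorm (X l)

/-! ### Auxiliary material -/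

instance {k : ℕ} : IsRefl (Finset (Fin k → ℕ)) MajLe :=
  ⟨fun X x hx => ⟨x, hx, le_refl x⟩⟩

instance {k : ℕ} : IsTrans (Finset (Fin k → ℕ)) MajLe :=
  ⟨fun _ _ _ h1 h2 x hx => by
    obtain ⟨y, hy, hxy⟩ := h1 x hx
    obtain ⟨z, hz, hyz⟩ := h2 y hy
    exact ⟨z, hz, le_trans hxy hyz⟩⟩

/-- The componentwise majoring order on d-tuples. -/
def TupLe {k d : ℕ} (a b : Fin d → Finset (Fin k → ℕ)) : Prop :=
  ∀ l, MajLe (a l) (b l)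

lemma forall₂_exists_le {α : Type*} {r : α → α → Prop} {l₁ l₂ : List α}
    (h : List.Forall₂ r l₁ l₂) : ∀ a ∈ l₁, ∃ b ∈ l₂, r a b := by
  induction h with
  | nil => simp
  | cons hr _ ih =>
    intro a ha
    rcases List.mem_cons.1 ha with rfl | ha
    · exact ⟨_, List.mem_cons_self, hr⟩
    · obtain ⟨b, hb, hab⟩ := ih a ha
      exact ⟨b, List.mem_cons_of_mem _ hb, hab⟩

/-- The majoring order on finite subsets of `ℕ^k` is a partial well order. -/
lemma majLe_pwo (k : ℕ) :
    (Set.univ : Set (Finset (Fin k → ℕ))).PartiallyWellOrderedOn MajLe := by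
  haveI h' : ∀ _i : Fin k, IsWellOrder ℕ (· < ·) := fun _ => inferInstance
  have hbase : (Set.univ : Set (Fin k → ℕ)).IsPWO :=
    Set.isPWO_univ_iff.2 inferInstance
  have hl := hbase.partiallyWellOrderedOn_sublistForall₂ (· ≤ ·)
  refine Set.partiallyWellOrderedOn_iff_exists_lt.2 fun f _ => ?_
  obtain ⟨i, j, hij, hsub⟩ := hl.exists_lt (f := fun m => (f m).toList) (fun m => by
    simp [Set.mem_setOf_eq])
  refine ⟨i, j, hij, ?_⟩
  rw [List.sublistForall₂_iff] at hsub
  obtain ⟨l, hfor, hsl⟩ := hsub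
  intro x hx
  obtain ⟨y, hy, hxy⟩ := forall₂_exists_le hfor x (by simpa using hx)
  exact ⟨y, by simpa using hsl.subset hy, hxy⟩

/-- A finite product of partial well orders (on univ) is a partial well order. -/
lemma pwo_pi {ι : Type*} [Fintype ι] {α : ι → Type*} (r : ∀ i, α i → α i → Prop)
    [∀ i, IsRefl (α i) (r i)] [∀ i, IsTrans (α i) (r i)]
    (h : ∀ i, (Set.univ : Set (α i)).PartiallyWellOrderedOn (r i)) :
    (Set.univ : Set (∀ i, α i)).PartiallyWellOrderedOn
      (fun a b => ∀ i, r i (a i) (b i)) := by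
  suffices H : ∀ s : Finset ι, ∀ f : ℕ → ∀ i, α i, ∃ g : ℕ ↪o ℕ,
      ∀ a b : ℕ, a ≤ b → ∀ i ∈ s, r i (f (g a) i) (f (g b) i) by
    refine Set.partiallyWellOrderedOn_iff_exists_lt.2 fun f _ => ?_
    obtain ⟨g, hg⟩ := H Finset.univ f
    exact ⟨g 0, g 1, g.strictMono (by norm_num),
      fun i => hg 0 1 (by norm_num) i (Finset.mem_univ i)⟩
  intro s
  induction s using Finset.cons_induction with
  | empty => exact fun f => ⟨RelEmbedding.refl _, by simp⟩
  | cons x s hx ih =>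
    intro f
    obtain ⟨g, hg⟩ := ih f
    haveI : IsPreorder (α x) (r x) := {}
    obtain ⟨g', hg'⟩ := (h x).exists_monotone_subseq (f := fun m => f (g m) x)
      (fun _ => Set.mem_univ _)
    refine ⟨g'.trans g, fun a b hab i hi => ?_⟩
    rcases Finset.mem_cons.1 hi with rfl | hi
    · exact hg' a b hab
    · exact hg (g' a) (g' b) (g'.monotone hab) i hi

/-- The finite set of tuples of norm at most `B`. -/
noncomputable def boundedTups (k d B : ℕ) : Finset (Fin d → Finset (Fin k → ℕ)) :=
  Fintype.piFinset fun _ : Fin d =>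
    (Fintype.piFinset fun _ : Fin k => Finset.range (B + 1)).powerset

lemma mem_boundedTups {k d B : ℕ} {x : Fin d → Finset (Fin k → ℕ)}
    (hx : tupNorm x ≤ B) : x ∈ boundedTups k d B := by
  rw [boundedTups, Fintype.mem_piFinset]
  intro l
  rw [Finset.mem_powerset]
  intro v hv
  rw [Fintype.mem_piFinset]
  intro i
  rw [Finset.mem_range]
  have h1 : setNorm (x l) ≤ B :=
    le_trans (Finset.le_sup (f := fun l => setNorm (x l)) (Finset.mem_univ l)) hx
  have h2 : vecNorm v ≤ B :=
    le_trans (le_trans (Finset.le_sup hv) (le_max_right _ _)) h1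
  have h3 : v i ≤ vecNorm v := Finset.le_sup (Finset.mem_univ i)
  omega

/-- `ExtSeq g n m f` says: the first `m` values of `f` extend to arbitrarily long
controlled bad sequences. -/
def ExtSeq (k d : ℕ) (g : ℕ → ℕ) (n m : ℕ) (f : ℕ → Fin d → Finset (Fin k → ℕ)) : Prop :=
  ∀ N : ℕ, ∃ h : ℕ → Fin d → Finset (Fin k → ℕ),
    (∀ i, i < m → h i = f i) ∧ (∀ i, i ≤ N → tupNorm (h i) ≤ g^[i] n) ∧
      ∀ i j, i < j → j ≤ N → ¬ TupLe (h i) (h j)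

lemma ext_step {k d : ℕ} {g : ℕ → ℕ} {n m : ℕ} {f : ℕ → Fin d → Finset (Fin k → ℕ)}
    (hm : ExtSeq k d g n m f) :
    ∃ v, ExtSeq k d g n (m + 1) (Function.update f m v) := by
  by_contra hv
  push_neg at hv
  have hv' : ∀ v, ∃ N : ℕ, ¬ ∃ h : ℕ → Fin d → Finset (Fin k → ℕ),
      (∀ i, i < m + 1 → h i = Function.update f m v i) ∧
      (∀ i, i ≤ N → tupNorm (h i) ≤ g^[i] n) ∧
      ∀ i j, i < j → j ≤ N → ¬ TupLe (h i) (h j) :=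
    fun v => not_forall.1 (hv v)
  choose Nf hNf using hv'
  classical
  set S := boundedTups k d (g^[m] n) with hS
  set M := S.sup Nf + m with hM
  obtain ⟨h, hpre, hctl, hbad⟩ := hm M
  have hvS : h m ∈ S := mem_boundedTups (hctl m (by omega))
  have hNM : Nf (h m) ≤ M := le_trans (Finset.le_sup hvS) (by omega)
  refine hNf (h m) ⟨h, ?_, ?_, ?_⟩
  · intro i hi
    rcases Nat.lt_succ_iff_lt_or_eq.1 hi with hi' | rfl
    · rw [Function.update_of_ne (Nat.ne_of_lt hi'), hpre i hi']
    · rw [Function.update_self]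
  · exact fun i hi => hctl i (le_trans hi hNM)
  · exact fun i j hij hj => hbad i j hij (le_trans hj hNM)

open Classical in
noncomputable def seqF (k d : ℕ) (g : ℕ → ℕ) (n : ℕ) :
    ℕ → ℕ → Fin d → Finset (Fin k → ℕ)
  | 0 => fun _ _ => ∅
  | (m + 1) =>
    Function.update (seqF k d g n m) m
      (if h : ExtSeq k d g n m (seqF k d g n m) then (ext_step h).choose else fun _ => ∅)

lemma seqF_ext {k d : ℕ} {g : ℕ → ℕ} {n : ℕ}
    (h0 : ∀ f, ExtSeq k d g n 0 f) : ∀ m, ExtSeq k d g n m (seqF k d g n m) := by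
  intro m
  induction m with
  | zero => exact h0 _
  | succ m ih =>
    show ExtSeq k d g n (m + 1) (Function.update (seqF k d g n m) m _)
    rw [dif_pos ih]
    exact (ext_step ih).choose_spec

lemma seqF_agree {k d : ℕ} {g : ℕ → ℕ} {n : ℕ} :
    ∀ m i, i < m → seqF k d g n m i = seqF k d g n (i + 1) i := by
  intro m
  induction m with
  | zero => omega
  | succ m ih =>
    intro i hi
    rcases Nat.lt_succ_iff_lt_or_eq.1 hi with hi' | rfl
    · show Function.update (seqF k d g n m) m _ i = _
      rw [Function.update_of_ne (Nat.ne_of_lt hi')]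
      exact ih i hi'
    · rfl

/-- For fixed `k, d > 0`, any control function `g` and any `n`, there is a
finite maximum length for `(g,n)`-controlled bad sequences over
`((P_f(ℕ^k))^d, ≼_maj^d, ‖·‖)`: there is `N` such that every controlled
sequence `a_0, …, a_N` contains `i < j` with `a_i ≼_maj^d a_j`. -/
theorem controlled_bad_majoring_bounded (k d : ℕ) (hk : 0 < k) (hd : 0 < d)
    (g : ℕ → ℕ) (hmono : Monotone g) (hge : ∀ x, x ≤ g x) (n : ℕ) :
    ∃ N : ℕ, ∀ a : Fin (N + 1) → (Fin d → Finset (Fin k → ℕ)),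
      (∀ i : Fin (N + 1), tupNorm (a i) ≤ g^[(i : ℕ)] n) →
      ∃ i j : Fin (N + 1), (i : ℕ) < j ∧ ∀ l : Fin d, MajLe (a i l) (a j l) := by
  classical
  by_contra hcon
  push_neg at hcon
  -- every prefix is extendable
  have h0 : ∀ f, ExtSeq k d g n 0 f := by
    intro f N
    obtain ⟨a, hactl, habad⟩ := hcon N
    refine ⟨fun i => a ⟨min i N, by omega⟩, fun i hi => by omega, ?_, ?_⟩
    · intro i hi
      have := hactl ⟨min i N, by omega⟩
      simpa [Nat.min_eq_left hi] using this
    · intro i j hij hj ht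
      obtain ⟨l, hl⟩ := habad ⟨min i N, by omega⟩ ⟨min j N, by omega⟩
        (by simp [Nat.min_eq_left hj, Nat.min_eq_left (le_trans (Nat.le_of_lt hij) hj)]; omega)
      exact hl (ht l)
  -- the infinite bad sequence
  set f : ℕ → Fin d → Finset (Fin k → ℕ) := fun i => seqF k d g n (i + 1) i with hf
  have hext := seqF_ext (k := k) (d := d) (g := g) (n := n) h0
  -- the wqo gives a good pair in `f`
  have hpwo : (Set.univ : Set (Fin d → Finset (Fin k → ℕ))).PartiallyWellOrderedOn
      (fun a b => ∀ l, MajLe (a l) (b l)) :=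
    pwo_pi (fun _ : Fin d => MajLe) (fun _ => majLe_pwo k)
  obtain ⟨i, j, hij, hgood⟩ := hpwo.exists_lt (f := f) (fun _ => Set.mem_univ _)
  -- but `f` is bad
  obtain ⟨h, hpre, _, hbad⟩ := hext (j + 1) j
  have hi : h i = f i := by
    rw [hpre i (by omega), hf, seqF_agree (j + 1) i (by omega)]
  have hj : h j = f j := by
    rw [hpre j (by omega), hf, seqF_agree (j + 1) j (by omega)]
  exact hbad i j hij (le_refl j) (by rw [hi, hj]; exact hgood)
end

section
/- Fix d > 0 and let formulas range over the finite set Fin d. The relation ≼ on hypersequents over Fin d, defined by g ≼ h iff for every component (Γ', π) of h there is a component (Γ, π) of g (with the same succedent π) such that Γ is a submultiset of Γ', is a well-quasi-ordering: for every infinite sequence (h_i) of hypersequents over Fin d there exist i < j with h_i ≼ h_j. -/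
/-- A sequent over `Fin d`: an antecedent (finite multiset of formulas)
together with a succedent (a formula or empty). -/
abbrev Sequent (d : ℕ) := Multiset (Fin d) × Option (Fin d)

/-- A hypersequent over `Fin d`: a finite multiset of sequents. -/
abbrev Hypersequent (d : ℕ) := Multiset (Sequent d)

namespace HypWqo

/-- Downward closed subsets of `Fin e → ℕ`. -/
def IsDown {e : ℕ} (S : Set (Fin e → ℕ)) : Prop :=
  ∀ ⦃x y : Fin e → ℕ⦄, x ≤ y → y ∈ S → x ∈ S

lemma sublistForall₂_get {α : Type*} {r : α → α → Prop} {l₁ l₂ : List α}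
    (h : List.SublistForall₂ r l₁ l₂) :
    ∀ k (hk : k < l₁.length), ∃ m, k ≤ m ∧ ∃ hm : m < l₂.length,
      r (l₁.get ⟨k, hk⟩) (l₂.get ⟨m, hm⟩) := by
  induction h with
  | nil => intro k hk; simp at hk
  | cons hab h ih =>
      intro k hk
      cases k with
      | zero => exact ⟨0, le_rfl, Nat.succ_pos _, hab⟩
      | succ k =>
          obtain ⟨m, hkm, hm, hr⟩ := ih k (Nat.lt_of_succ_lt_succ hk)
          exact ⟨m + 1, Nat.succ_le_succ hkm, Nat.succ_lt_succ hm, hr⟩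
  | cons_right h ih =>
      intro k hk
      obtain ⟨m, hkm, hm, hr⟩ := ih k hk
      exact ⟨m + 1, hkm.trans (Nat.le_succ m), Nat.succ_lt_succ hm, hr⟩

lemma cons_le_cons {e : ℕ} {a b : ℕ} {x y : Fin e → ℕ} (hab : a ≤ b) (hxy : x ≤ y) :
    (Fin.cons a x : Fin (e + 1) → ℕ) ≤ Fin.cons b y := by
  intro i
  refine Fin.cases ?_ ?_ i
  · simpa using hab
  · intro k; simpa using hxy k

lemma isDown_pwo : ∀ e : ℕ, Set.IsPWO {S : Set (Fin e → ℕ) | IsDown S} := by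
  intro e
  induction e with
  | zero =>
      rw [Set.IsPWO, Set.partiallyWellOrderedOn_iff_exists_lt]
      intro f _
      have huniq : ∀ x y : Fin 0 → ℕ, x = y := fun x y => Subsingleton.elim x y
      by_cases h1 : (fun _ => 0 : Fin 0 → ℕ) ∈ f 1
      · exact ⟨0, 1, Nat.zero_lt_one, fun x hx => by
          rw [huniq x (fun _ => 0)]; exact h1⟩
      · exact ⟨1, 2, Nat.lt_succ_self 1, fun x hx => absurd (by
          rw [← huniq x (fun _ => 0)]; exact hx) h1⟩
  | succ e ih =>
      rw [Set.IsPWO, Set.partiallyWellOrderedOn_iff_exists_lt]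
      intro f hf
      set slice : ℕ → ℕ → Set (Fin e → ℕ) :=
        fun i n => {x | (Fin.cons n x : Fin (e + 1) → ℕ) ∈ f i} with hslice
      have dslice : ∀ i n, IsDown (slice i n) := by
        intro i n x y hxy hy
        exact hf i (cons_le_cons le_rfl hxy) hy
      have anti : ∀ i, ∀ {m n : ℕ}, m ≤ n → slice i n ⊆ slice i m := by
        intro i m n hmn x hx
        exact hf i (cons_le_cons hmn le_rfl) hx
      -- stabilization of slices
      have stab : ∀ i, ∃ N, ∀ n, N ≤ n → slice i n = slice i N := by
        intro i
        by_contra hcon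
        push_neg at hcon
        choose nf hnf1 hnf2 using hcon
        have key : ∀ M, ∃ x, x ∈ slice i M ∧ x ∉ slice i (nf M) := by
          intro M
          have hss : slice i (nf M) ⊂ slice i M :=
            (anti i (hnf1 M)).ssubset_of_ne (hnf2 M)
          obtain ⟨x, hx1, hx2⟩ := Set.exists_of_ssubset hss
          exact ⟨x, hx1, hx2⟩
        choose x hx1 hx2 using key
        let F : ℕ → ℕ := fun k => Nat.rec 0 (fun _ m => nf m + 1) k
        have hFs : StrictMono F := by
          apply strictMono_nat_of_lt_succ
          intro k
          exact Nat.lt_succ_of_le (hnf1 (F k))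
        obtain ⟨k, l, hkl, hle⟩ :=
          (Set.isPWO_of_wellQuasiOrderedLE (Set.univ : Set (Fin e → ℕ))).exists_lt
            (f := fun k => x (F k)) (fun _ => Set.mem_univ _)
        have h1 : x (F l) ∈ slice i (nf (F k)) := by
          apply anti i _ (hx1 (F l))
          have : F (k + 1) ≤ F l := hFs.monotone (Nat.succ_le_of_lt hkl)
          exact le_trans (Nat.le_succ _) this
        exact hx2 (F k) (dslice i (nf (F k)) hle h1)
      choose N hN using stab
      set lam : ℕ → Set (Fin e → ℕ) := fun i => slice i (N i) with hlam
      set L : ℕ → List (Set (Fin e → ℕ)) :=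
        fun i => List.ofFn (fun t : Fin (N i) => slice i t) with hL
      obtain ⟨g, hg⟩ := ih.exists_monotone_subseq (f := lam) (fun i => dslice i (N i))
      have higman := ih.partiallyWellOrderedOn_sublistForall₂ (r := (· ≤ ·))
      obtain ⟨k, l, hkl, hsf⟩ := higman.exists_lt (f := fun k => L (g k)) (by
        intro k S hS
        rw [hL, List.mem_ofFn] at hS
        obtain ⟨t, rfl⟩ := hS
        exact dslice (g k) t)
      set i := g k
      set j := g l
      have hij : i < j := g.strictMono hkl
      have hlamij : lam i ≤ lam j := hg (le_of_lt hkl)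
      -- all slices are comparable
      have claim : ∀ n, slice i n ⊆ slice j n := by
        intro n
        have hlamj : ∀ n, lam j ⊆ slice j n := by
          intro n
          rcases le_or_gt (N j) n with hn | hn
          · rw [hN j n hn]
          · exact anti j (le_of_lt hn)
        rcases lt_or_ge n (N i) with hn | hn
        · have hk' : n < (L i).length := by simpa [hL] using hn
          obtain ⟨m, hnm, hm, hr⟩ := sublistForall₂_get hsf n hk'
          have hmN : m < N j := by simpa [hL] using hm
          have e1 : (L i).get ⟨n, hk'⟩ = slice i n := by
            simp [hL, List.get_ofFn]
          have e2 : (L j).get ⟨m, hm⟩ = slice j m := by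
            simp [hL, List.get_ofFn]
          rw [e1, e2] at hr
          exact hr.trans (anti j hnm)
        · rw [hN i n hn]
          exact le_trans hlamij (hlamj n)
      refine ⟨i, j, hij, fun x hx => ?_⟩
      have hx' : Fin.tail x ∈ slice i (x 0) := by
        show (Fin.cons (x 0) (Fin.tail x) : Fin (e + 1) → ℕ) ∈ f i
        rw [Fin.cons_self_tail]
        exact hx
      have := claim (x 0) hx'
      show x ∈ f j
      rw [← Fin.cons_self_tail x]
      exact this

/-- Minoring well-quasi-ordering for arbitrary subsets of `Fin e → ℕ`. -/
lemma minoring (e : ℕ) (A : ℕ → Set (Fin e → ℕ)) :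
    ∃ i j, i < j ∧ ∀ b ∈ A j, ∃ a ∈ A i, a ≤ b := by
  have hdown : ∀ n, IsDown {x : Fin e → ℕ | ∀ a ∈ A n, ¬ a ≤ x} := by
    intro n x y hxy hy a ha hax
    exact hy a ha (hax.trans hxy)
  obtain ⟨i, j, hij, hsub⟩ :=
    (isDown_pwo e).exists_lt (f := fun n => {x | ∀ a ∈ A n, ¬ a ≤ x}) hdown
  refine ⟨i, j, hij, fun b hb => ?_⟩
  have hbj : b ∉ {x : Fin e → ℕ | ∀ a ∈ A j, ¬ a ≤ x} := fun hcon => hcon b hb le_rfl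
  have hbi : b ∉ {x : Fin e → ℕ | ∀ a ∈ A i, ¬ a ≤ x} := fun h => hbj (hsub h)
  simp only [Set.mem_setOf_eq, not_forall, not_not, exists_prop] at hbi
  obtain ⟨a, ha, hab⟩ := hbi
  exact ⟨a, ha, hab⟩

/-- Decoding of succedents from `Fin (d+1)`. -/
def decodeS (d : ℕ) (b : Fin (d + 1)) : Option (Fin d) :=
  if h : (b : ℕ) < d then some ⟨b, h⟩ else none

lemma decodeS_surj (d : ℕ) (π : Option (Fin d)) : ∃ b, decodeS d b = π := by
  cases π with
  | none =>
      refine ⟨Fin.last d, ?_⟩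
      simp [decodeS]
  | some a =>
      refine ⟨a.castSucc, ?_⟩
      simp [decodeS, a.isLt]

/-- Encoding of sequents into `Fin (d + (d+1)) → ℕ`. -/
def enc (d : ℕ) (s : Sequent d) : Fin (d + (d + 1)) → ℕ :=
  Fin.addCases (fun a => s.1.count a) (fun b => if s.2 = decodeS d b then 1 else 0)

lemma enc_le {d : ℕ} {s s' : Sequent d} (h : enc d s ≤ enc d s') :
    s.2 = s'.2 ∧ s.1 ≤ s'.1 := by
  constructor
  · obtain ⟨b, hb⟩ := decodeS_surj d s.2
    have h1 := h (Fin.natAdd d b)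
    simp only [enc, Fin.addCases_right] at h1
    rw [hb, if_pos rfl] at h1
    by_contra hne
    rw [if_neg (fun e => hne e.symm)] at h1
    omega
  · rw [Multiset.le_iff_count]
    intro a
    have h2 := h (Fin.castAdd (d + 1) a)
    simpa only [enc, Fin.addCases_left] using h2

end HypWqo

/-- The relation `≼` on hypersequents over `Fin d`, defined by `g ≼ h` iff every
component of `h` has a component of `g` with the same succedent and a smaller
antecedent, is a well-quasi-ordering. -/
theorem hypersequent_min_wqo (d : ℕ) (hd : 0 < d) (h : ℕ → Hypersequent d) :
    ∃ i j, i < j ∧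
      ∀ s' ∈ h j, ∃ s ∈ h i, s.2 = s'.2 ∧ s.1 ≤ s'.1 := by
  obtain ⟨i, j, hij, hmin⟩ :=
    HypWqo.minoring (d + (d + 1)) (fun n => HypWqo.enc d '' {s | s ∈ h n})
  refine ⟨i, j, hij, fun s' hs' => ?_⟩
  obtain ⟨a, ⟨s, hs, rfl⟩, hle⟩ := hmin (HypWqo.enc d s') ⟨s', hs', rfl⟩
  exact ⟨s, hs, HypWqo.enc_le hle⟩
end
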